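/- arXiv:2207.09952 — 9 statements merged into one kernel-verified Lean document; each statement's English description precedes it below -/
import Mathlib

section
/- Let K be a field and V a commutative K-algebra of finite dimension r with a K-basis e_0, e_1, …, e_{r−1} such that e_0 = 1 and, for every 0 ≤ i ≤ r−2, e_1·e_i = c_i·e_{i−1} + d_i·e_i + e_{i+1} for some scalars c_i, d_i ∈ K (with the convention e_{−1} = 0). Then the K-algebra homomorphism K[t] → V sending t to e_1 is surjective; consequently 1, e_1, e_1², …, e_1^{r−1} is a K-basis of V and V is isomorphic as a K-algebra to K[t]/(P), where P is the characteristic polynomial of the multiplication operator by e_1. -/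
open Polynomial

/-!
If `x * eᵢ ≡ eᵢ₊₁` modulo `span {e₀, …, eᵢ}` for a basis with `e₀ = 1`, induction on `i`
puts every `eᵢ` in `K[x]`, so `x` generates `V`; a tridiagonal action of `x = e₁` is a special
case. Then `1, x, …, x^{r-1}` is a power basis, and the characteristic polynomial of
multiplication by `x` is the minimal polynomial of `x`, whence `V ≅ K[t]/(P)`.
-/

theorem mem_adjoin_singleton_of_sub_mul_mem_span {R A : Type*} [CommSemiring R] [Ring A]
    [Algebra R A] {r : ℕ} [NeZero r] (e : Fin r → A) (he0 : e 0 = 1) (x : A)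
    (hstep : ∀ (i : Fin r) (h : (i : ℕ) + 1 < r),
      e ⟨i + 1, h⟩ - x * e i ∈ Submodule.span R (e '' Set.Iic i))
    (i : Fin r) : e i ∈ Algebra.adjoin R {x} := by
  set S := Algebra.adjoin R {x}
  suffices ∀ n (hn : n < r), e ⟨n, hn⟩ ∈ S from this i i.isLt
  intro n
  induction n using Nat.strong_induction_on with
  | _ n ih =>
    intro hn
    cases n with
    | zero => simp [he0, S.one_mem]
    | succ m =>
      have hm : m < r := by omega
      have hspan : Submodule.span R (e '' Set.Iic ⟨m, hm⟩) ≤ Subalgebra.toSubmodule S := by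
        rw [Submodule.span_le]
        rintro _ ⟨j, hj, rfl⟩
        exact ih j (Nat.lt_succ_of_le hj) j.isLt
      have hx : x ∈ S := Algebra.self_mem_adjoin_singleton R x
      simpa using S.add_mem (hspan (hstep ⟨m, hm⟩ hn)) (S.mul_mem hx (ih m m.lt_succ_self hm))

theorem Module.Basis.adjoin_singleton_eq_top_of_sub_mul_mem_span {R A : Type*} [CommSemiring R]
    [Ring A] [Algebra R A] {r : ℕ} [NeZero r] (b : Module.Basis (Fin r) R A) (hb0 : b 0 = 1)
    (x : A) (hstep : ∀ (i : Fin r) (h : (i : ℕ) + 1 < r),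
      b ⟨i + 1, h⟩ - x * b i ∈ Submodule.span R (b '' Set.Iic i)) :
    Algebra.adjoin R {x} = ⊤ := by
  rw [← Algebra.toSubmodule_eq_top, eq_top_iff, ← b.span_eq, Submodule.span_le]
  rintro _ ⟨i, rfl⟩
  exact mem_adjoin_singleton_of_sub_mul_mem_span b hb0 x hstep i

theorem sub_mul_mem_span_of_tridiagonal {R A : Type*} [CommRing R] [Ring A] [Algebra R A]
    {r : ℕ} (e : Fin r → A) (x : A) (c d : Fin r → R) (i : Fin r) (h : (i : ℕ) + 1 < r)
    (htri : x * e i =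
      c i • (if _ : (i : ℕ) = 0 then 0 else e ⟨(i : ℕ) - 1, (i.val.sub_le 1).trans_lt i.isLt⟩)
      + d i • e i + e ⟨(i : ℕ) + 1, h⟩) :
    e ⟨i + 1, h⟩ - x * e i ∈ Submodule.span R (e '' Set.Iic i) := by
  have hself : e i ∈ Submodule.span R (e '' Set.Iic i) :=
    Submodule.subset_span ⟨i, Set.mem_Iic.2 le_rfl, rfl⟩
  rw [htri, sub_add_cancel_right]
  refine neg_mem (add_mem (Submodule.smul_mem _ _ ?_) (Submodule.smul_mem _ _ hself))
  split_ifs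
  · exact zero_mem _
  · exact Submodule.subset_span ⟨_, Fin.le_def.2 (Nat.sub_le _ _), rfl⟩

theorem PowerBasis.charpoly_mulLeft_gen {R S : Type*} [CommRing R] [Ring S] [Algebra R S]
    [Module.Free R S] [Module.Finite R S] (pb : PowerBasis R S) :
    (LinearMap.mulLeft R pb.gen).charpoly = minpoly R pb.gen := by
  rw [← LinearMap.charpoly_toMatrix _ pb.basis, ← charpoly_leftMulMatrix pb]
  rfl

/-- If a commutative `K`-algebra of dimension `r` has a basis `e₀ = 1, e₁, …, e_{r-1}`
on which multiplication by `e₁` acts tridiagonally (with the convention `e₋₁ = 0`),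
then the algebra map `K[t] → V`, `t ↦ e₁`, is surjective; consequently the powers
`1, e₁, …, e₁^{r-1}` form a basis of `V` and `V ≅ K[t]/(P)` where `P` is the
characteristic polynomial of the multiplication operator by `e₁`. -/
theorem stmt1 {K : Type*} [Field K] {V : Type*} [CommRing V] [Algebra K V]
    [FiniteDimensional K V] {r : ℕ} [NeZero r]
    (b : Module.Basis (Fin r) K V) (hb0 : b 0 = 1) (c d : Fin r → K)
    (htri : ∀ i : Fin r, ∀ h : (i : ℕ) + 1 < r,
      b 1 * b i =
        c i • (if hi : (i : ℕ) = 0 then 0 else b ⟨(i : ℕ) - 1, by omega⟩)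
          + d i • b i + b ⟨(i : ℕ) + 1, h⟩) :
    Function.Surjective (Polynomial.aeval (b 1) : K[X] →ₐ[K] V) ∧
    (∃ pb : Module.Basis (Fin r) K V, ∀ i : Fin r, pb i = b 1 ^ (i : ℕ)) ∧
    Nonempty ((K[X] ⧸ Ideal.span {(LinearMap.mulLeft K (b 1)).charpoly}) ≃ₐ[K] V) := by
  have hadj : Algebra.adjoin K {b 1} = ⊤ :=
    b.adjoin_singleton_eq_top_of_sub_mul_mem_span hb0 (b 1) fun i h =>
      sub_mul_mem_span_of_tridiagonal b (b 1) c d i h (htri i h)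
  let pb := PowerBasis.ofAdjoinEqTop (Algebra.IsIntegral.isIntegral (b 1)) hadj
  have hgen : pb.gen = b 1 := rfl
  have hdim : pb.dim = r := by
    rw [← pb.finrank, Module.finrank_eq_card_basis b, Fintype.card_fin]
  refine ⟨?_, ⟨pb.basis.reindex (finCongr hdim), fun i => ?_⟩, ⟨?_⟩⟩
  · rwa [← AlgHom.range_eq_top, ← Algebra.adjoin_singleton_eq_range_aeval]
  · simp [← hgen]
  · rw [← hgen, pb.charpoly_mulLeft_gen]
    exact AdjoinRoot.equiv' _ pb (by rw [AdjoinRoot.aeval_eq, AdjoinRoot.mk_self])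
      (minpoly.aeval K _)
end

section
/- Let V be a finite-dimensional commutative semisimple ℚ-algebra and let α ∈ V be invertible. Define the bilinear form η on V by η(x,y) = tr_{V/ℚ}(α·x·y). Then η is nondegenerate, and for any two bases (e_1,…,e_n) and (f_1,…,f_n) of V that are dual with respect to η (i.e. η(e_i, f_j) = δ_{ij}), one has Σ_{i=1}^{n} e_i·f_i = α^{−1}. -/
/-!
A reduced finite-dimensional commutative `ℚ`-algebra is semisimple, so every principal ideal
`(z)` is generated by an idempotent `e = cz`. Multiplication by an idempotent is a projection,
whose trace is its rank; in characteristic zero, `tr(cz) = 0` therefore forces `e = 0` and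
hence `z = 0`. So the trace form is nondegenerate, and so is `η`, as `α` is a unit.

If `(eᵢ)` and `(fᵢ)` are `η`-dual, then `(eᵢ)` and `(α fᵢ)` are dual for the trace form, so the
`i`-th coordinate of `y` in the basis `(eᵢ)` is `tr(y α fᵢ)`. Computing `tr(y)` as the trace of
the matrix of multiplication by `y` gives `tr(y) = Σ tr(y eᵢ α fᵢ)`, i.e. `y ↦ tr(y (α Σ eᵢ fᵢ - 1))`
vanishes, and nondegeneracy gives `α Σ eᵢ fᵢ = 1`.
-/

section CharZeroField

variable {K A : Type*} [Field K] [CharZero K] [CommRing A] [Algebra K A] [FiniteDimensional K A]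

theorem IsIdempotentElem.eq_zero_of_algebra_trace_eq_zero {e : A} (he : IsIdempotentElem e)
    (htr : Algebra.trace K A e = 0) : e = 0 := by
  have hmul : Algebra.lmul K A e = 0 :=
    LinearMap.IsIdempotentElem.eq_zero_of_trace_eq_zero (he.map (Algebra.lmul K A)) htr
  simpa using congr($hmul 1)

theorem Algebra.traceForm_nondegenerate_of_isSemisimpleRing [IsSemisimpleRing A] :
    (Algebra.traceForm K A).Nondegenerate := by
  refine (Algebra.traceForm_isSymm (S := A) K).isRefl.nondegenerate_iff_separatingLeft.mpr
    fun z hz => ?_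
  obtain ⟨e, he, hspan⟩ := IsSemisimpleRing.ideal_eq_span_idempotent (Ideal.span {z})
  have he_mem : e ∈ Ideal.span {z} := hspan ▸ Ideal.mem_span_singleton_self e
  obtain ⟨c, rfl⟩ := Ideal.mem_span_singleton'.mp he_mem
  have hcz : c * z = 0 :=
    he.eq_zero_of_algebra_trace_eq_zero (by simpa [mul_comm] using hz c)
  have hz_mem : z ∈ Ideal.span {c * z} := hspan ▸ Ideal.mem_span_singleton_self z
  simpa [hcz] using hz_mem

end CharZeroField

section TraceDual

variable {R A ι : Type*} [CommRing R] [CommRing A] [Algebra R A] [Fintype ι] [DecidableEq ι]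
  {e : Module.Basis ι R A} {g : ι → A}

omit [Fintype ι] in
theorem Module.Basis.repr_eq_trace_mul_of_trace_dual
    (h : ∀ i j, Algebra.trace R A (e i * g j) = if i = j then 1 else 0) (x : A) (i : ι) :
    e.repr x i = Algebra.trace R A (x * g i) := by
  have hcoord : e.coord i = Algebra.trace R A ∘ₗ LinearMap.mulRight R (g i) :=
    e.ext fun j => by simp [h, Finsupp.single_apply, eq_comm]
  exact LinearMap.congr_fun hcoord x

theorem Algebra.trace_eq_sum_trace_mul_mul_of_trace_dual
    (h : ∀ i j, Algebra.trace R A (e i * g j) = if i = j then 1 else 0) (x : A) :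
    Algebra.trace R A x = ∑ i, Algebra.trace R A (x * e i * g i) := by
  rw [Algebra.trace_eq_matrix_trace e, Matrix.trace]
  simp [Algebra.leftMulMatrix_eq_repr_mul, e.repr_eq_trace_mul_of_trace_dual h]

theorem Algebra.sum_mul_eq_one_of_trace_dual (hnd : (Algebra.traceForm R A).Nondegenerate)
    (h : ∀ i j, Algebra.trace R A (e i * g j) = if i = j then 1 else 0) :
    ∑ i, e i * g i = 1 := by
  refine sub_eq_zero.mp (hnd.2 _ fun y => ?_)
  simp only [Algebra.traceForm_apply, map_sub, map_sum, mul_one,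
    ← mul_assoc, ← Algebra.trace_eq_sum_trace_mul_mul_of_trace_dual h, sub_self]

end TraceDual

/-- On a finite-dimensional commutative semisimple (i.e. reduced) `ℚ`-algebra `V`
with an invertible element `α`, the bilinear form `η(x,y) = tr_{V/ℚ}(α·x·y)` is
nondegenerate, and for any pair of `η`-dual bases `(eᵢ)`, `(fᵢ)` one has
`Σ eᵢ·fᵢ = α⁻¹`. -/
theorem stmt2 {V : Type*} [CommRing V] [Algebra ℚ V] [FiniteDimensional ℚ V]
    [IsReduced V] (α : V) (hα : IsUnit α) :
    (∀ x : V, (∀ y : V, Algebra.trace ℚ V (α * x * y) = 0) → x = 0) ∧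
    ∀ (n : ℕ) (e f : Module.Basis (Fin n) ℚ V),
      (∀ i j : Fin n, Algebra.trace ℚ V (α * e i * f j) = if i = j then 1 else 0) →
      ∑ i : Fin n, e i * f i = Ring.inverse α := by
  have : IsArtinianRing V := .of_finite ℚ V
  have : IsSemisimpleRing V := IsArtinianRing.isSemisimpleRing_of_isReduced V
  have hnd := Algebra.traceForm_nondegenerate_of_isSemisimpleRing (K := ℚ) (A := V)
  refine ⟨fun x hx => hα.mul_right_eq_zero.mp (hnd.1 _ hx), fun n e f hd => ?_⟩
  have hsum : α * ∑ i, e i * f i = 1 := by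
    rw [← Algebra.sum_mul_eq_one_of_trace_dual (e := e) (g := fun i => α * f i) hnd
      fun i j => by rw [mul_left_comm, ← mul_assoc, hd]]
    simp only [Finset.mul_sum, mul_left_comm]
  rw [← Ring.inverse_mul_cancel_left α (∑ i, e i * f i) hα, hsum, mul_one]
end

section
/- Let R be a (not necessarily commutative) unital ring, let A, B ∈ R be units such that 1 − A is a unit, and set C = (AB)^{−1}. Then A^{−1} − 1 and CB − 1 are units of R and the following three elements of R coincide: (B^{−1} − 1)(A^{−1} − 1)^{−1}(B − A^{−1}) = (1 − B^{−1})(1 − A)^{−1}(1 − C^{−1}) = (B − 1)(CB − 1)^{−1}(C − 1). -/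
/-!
Everything follows from `A⁻¹ - 1 = A⁻¹ (1 - A)` and from `CB - 1 = B⁻¹ (A⁻¹ - 1) B` being a
conjugate of it: substituting the resulting inverses, each of the three expressions collapses to
`(1 - B⁻¹)(1 - A)⁻¹(1 - AB)`.
-/

open scoped Ring

namespace Ring

variable {R : Type*} [Ring R] {a b : R}

theorem inverse_sub_one_eq (ha : IsUnit a) : a⁻¹ʳ - 1 = a⁻¹ʳ * (1 - a) := by
  rw [mul_sub, mul_one, inverse_mul_cancel a ha]

theorem isUnit_inverse_sub_one (ha : IsUnit a) (h1a : IsUnit (1 - a)) : IsUnit (a⁻¹ʳ - 1) := by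
  rw [inverse_sub_one_eq ha]
  exact ha.ringInverse.mul h1a

theorem inverse_inverse_sub_one (ha : IsUnit a) : (a⁻¹ʳ - 1)⁻¹ʳ = (1 - a)⁻¹ʳ * a := by
  rw [inverse_sub_one_eq ha, inverse_mul (.inl ha.ringInverse), inverse_inverse ha]

theorem inverse_conj (x : R) (hb : IsUnit b) : (b⁻¹ʳ * x * b)⁻¹ʳ = b⁻¹ʳ * x⁻¹ʳ * b := by
  rw [inverse_mul (.inr hb), inverse_mul (.inl hb.ringInverse), inverse_inverse hb, mul_assoc]

theorem inverse_mul_mul_sub_one (ha : IsUnit a) (hb : IsUnit b) :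
    (a * b)⁻¹ʳ * b - 1 = b⁻¹ʳ * (a⁻¹ʳ - 1) * b := by
  rw [inverse_mul (.inl ha), mul_sub, sub_mul, mul_one, inverse_mul_cancel b hb]

/-- The common value of the three expressions; divided by `i` it is the twisted intersection form
on a pair of pants in Meyer's formula. -/
noncomputable def pantsForm (a b : R) : R := (1 - b⁻¹ʳ) * (1 - a)⁻¹ʳ * (1 - a * b)

theorem inverse_sub_one_mul_inverse_mul_sub_eq_pantsForm (ha : IsUnit a) :
    (b⁻¹ʳ - 1) * (a⁻¹ʳ - 1)⁻¹ʳ * (b - a⁻¹ʳ) = pantsForm a b := by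
  have hab : a * (b - a⁻¹ʳ) = -(1 - a * b) := by
    rw [mul_sub, mul_inverse_cancel a ha, neg_sub]
  rw [pantsForm, inverse_inverse_sub_one ha, mul_assoc, mul_assoc, hab]
  noncomm_ring

theorem sub_one_mul_inverse_mul_sub_one_eq_pantsForm (ha : IsUnit a) (hb : IsUnit b) :
    (b - 1) * ((a * b)⁻¹ʳ * b - 1)⁻¹ʳ * ((a * b)⁻¹ʳ - 1) = pantsForm a b := by
  have hb' : (b - 1) * b⁻¹ʳ = 1 - b⁻¹ʳ := by
    rw [sub_mul, one_mul, mul_inverse_cancel b hb]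
  have hab : a * b * ((a * b)⁻¹ʳ - 1) = 1 - a * b := by
    rw [mul_sub, mul_one, mul_inverse_cancel _ (ha.mul hb)]
  rw [inverse_mul_mul_sub_one ha hb, inverse_conj _ hb, inverse_inverse_sub_one ha, pantsForm,
    ← hb', ← hab]
  noncomm_ring

end Ring

open Ring in
/-- In a unital ring, if `A`, `B` and `1 - A` are units and `C = (AB)⁻¹`, then
`A⁻¹ - 1` and `CB - 1` are units and
`(B⁻¹-1)(A⁻¹-1)⁻¹(B-A⁻¹) = (1-B⁻¹)(1-A)⁻¹(1-C⁻¹) = (B-1)(CB-1)⁻¹(C-1)`. -/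
theorem stmt4 {R : Type*} [Ring R] (A B : R) (hA : IsUnit A) (hB : IsUnit B)
    (h1A : IsUnit (1 - A)) :
    IsUnit (Ring.inverse A - 1) ∧
    IsUnit (Ring.inverse (A * B) * B - 1) ∧
    (Ring.inverse B - 1) * Ring.inverse (Ring.inverse A - 1) * (B - Ring.inverse A) =
      (1 - Ring.inverse B) * Ring.inverse (1 - A) *
        (1 - Ring.inverse (Ring.inverse (A * B))) ∧
    (1 - Ring.inverse B) * Ring.inverse (1 - A) *
        (1 - Ring.inverse (Ring.inverse (A * B))) =
      (B - 1) * Ring.inverse (Ring.inverse (A * B) * B - 1) * (Ring.inverse (A * B) - 1) := by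
  have hA1 := isUnit_inverse_sub_one hA h1A
  have hmiddle : (1 - B⁻¹ʳ) * (1 - A)⁻¹ʳ * (1 - (A * B)⁻¹ʳ⁻¹ʳ) = pantsForm A B := by
    rw [inverse_inverse (hA.mul hB), pantsForm]
  refine ⟨hA1, ?_, ?_, ?_⟩
  · rw [inverse_mul_mul_sub_one hA hB]
    exact (hB.ringInverse.mul hA1).mul hB
  · rw [hmiddle, inverse_sub_one_mul_inverse_mul_sub_eq_pantsForm hA]
  · rw [hmiddle, sub_one_mul_inverse_mul_sub_one_eq_pantsForm hA hB]
end

section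
/- Let J be an invertible Hermitian n×n complex matrix, and let A, B, C ∈ GL_n(ℂ) be J-unitary matrices such that ABC = 1 and 1 − A is invertible. Then the matrix H = −i·(1 − B^{−1})(1 − A)^{−1}(1 − C^{−1}) is J-self-adjoint, i.e. H†·J = J·H (equivalently, J·H is a Hermitian matrix). -/
/-!
Call `Y` a `J`-adjoint of `X` when `Xᴴ J = J Y`. This relation reverses products and is
compatible with `1 - ·`, scalars and inverses, and a `J`-unitary `U` has `J`-adjoint `U⁻¹`.
Hence `Hᴴ J = J H'` with `H' = i (1 - C)(1 - A⁻¹)⁻¹(1 - B)`, and `H' = H` is a `J`-free identity: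
with `X = (1 - A)⁻¹` one has `(1 - A⁻¹)⁻¹ = 1 - X`, `C = B⁻¹A⁻¹` and `C⁻¹ = AB`, after which both
sides expand to the same noncommutative polynomial in `B`, `B⁻¹` and `X`.
-/

open Matrix

namespace Matrix

section OneSubInv

variable {m α : Type*} [Fintype m] [DecidableEq m] [CommRing α] {A B C : Matrix m m α}

theorem inv_one_sub_mul_self (h1A : IsUnit (1 - A).det) :
    (1 - A)⁻¹ * A = (1 - A)⁻¹ - 1 := by
  have h := nonsing_inv_mul _ h1A
  rw [mul_sub, mul_one] at h
  exact eq_sub_iff_add_eq.mpr (sub_eq_iff_eq_add'.mp h).symm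

theorem one_sub_inv_mul_one_sub_inv_one_sub (hA : IsUnit A.det)
    (h1A : IsUnit (1 - A).det) : (1 - A⁻¹) * (1 - (1 - A)⁻¹) = 1 := by
  have hl : 1 - A⁻¹ = -(A⁻¹ * (1 - A)) := by rw [mul_sub, mul_one, nonsing_inv_mul _ hA, neg_sub]
  have hr : 1 - (1 - A)⁻¹ = -((1 - A)⁻¹ * A) := by rw [inv_one_sub_mul_self h1A]; abel
  rw [hl, hr, neg_mul_neg, mul_assoc, ← mul_assoc (1 - A), mul_nonsing_inv _ h1A, one_mul,
    nonsing_inv_mul _ hA]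

theorem one_sub_mul_inv_one_sub_inv_mul_one_sub (hA : IsUnit A.det) (hB : IsUnit B.det)
    (h1A : IsUnit (1 - A).det) (hABC : A * B * C = 1) :
    (1 - C) * (1 - A⁻¹)⁻¹ * (1 - B) = -((1 - B⁻¹) * (1 - A)⁻¹ * (1 - C⁻¹)) := by
  set X := (1 - A)⁻¹
  have hC : C = B⁻¹ * A⁻¹ := by
    rw [← mul_inv_rev, inv_eq_right_inv hABC]
  have hC' : C⁻¹ = A * B := inv_eq_left_inv hABC
  have hinv : (1 - A⁻¹)⁻¹ = 1 - X :=
    inv_eq_right_inv (one_sub_inv_mul_one_sub_inv_one_sub hA h1A)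
  have hXA : X * A = X - 1 := inv_one_sub_mul_self h1A
  have hXl : (1 - A) * X = 1 := mul_nonsing_inv _ h1A
  have hAX : A⁻¹ * (1 - X) = -X :=
    calc A⁻¹ * (1 - X) = A⁻¹ * ((1 - A) * X) - A⁻¹ * X := by rw [hXl, mul_one, mul_sub, mul_one]
      _ = -X := by rw [← mul_assoc, mul_sub, mul_one, nonsing_inv_mul _ hA]; noncomm_ring
  have hBB : B⁻¹ * B = 1 := nonsing_inv_mul _ hB
  calc (1 - C) * (1 - A⁻¹)⁻¹ * (1 - B)
      = (1 - X) * (1 - B) - B⁻¹ * (A⁻¹ * (1 - X)) * (1 - B) := by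
        rw [hC, hinv]; noncomm_ring
    _ = -((1 - B⁻¹) * (X - (X - 1) * B)) + (1 - B⁻¹ * B) := by rw [hAX]; noncomm_ring
    _ = -((1 - B⁻¹) * X * (1 - C⁻¹)) := by
        rw [hBB, sub_self, add_zero, hC', ← hXA]; noncomm_ring

end OneSubInv

section JAdjoint

variable {m α : Type*} [Fintype m] [CommRing α] [StarRing α]

/-- `Y` is the `J`-adjoint `J⁻¹ Xᴴ J` of `X`, phrased without inverting `J`. -/
def IsJAdjoint (J X Y : Matrix m m α) : Prop :=
  Xᴴ * J = J * Y

variable {J X Y X' Y' : Matrix m m α}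

theorem IsJAdjoint.mul (hX : IsJAdjoint J X X') (hY : IsJAdjoint J Y Y') :
    IsJAdjoint J (X * Y) (Y' * X') := by
  unfold IsJAdjoint at *
  rw [conjTranspose_mul, mul_assoc, hX, ← mul_assoc, hY, mul_assoc]

theorem IsJAdjoint.smul (c : α) (hX : IsJAdjoint J X X') :
    IsJAdjoint J (c • X) (star c • X') := by
  unfold IsJAdjoint at *
  rw [conjTranspose_smul, smul_mul, hX, Matrix.mul_smul]

variable [DecidableEq m]

theorem IsJAdjoint.one_sub (hX : IsJAdjoint J X X') : IsJAdjoint J (1 - X) (1 - X') := by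
  unfold IsJAdjoint at *
  rw [conjTranspose_sub, conjTranspose_one, sub_mul, hX, mul_sub, one_mul, mul_one]

theorem IsJAdjoint.inv (hX : IsJAdjoint J X X') (hXd : IsUnit X.det) (hX'd : IsUnit X'.det) :
    IsJAdjoint J X⁻¹ X'⁻¹ :=
  calc X⁻¹ᴴ * J = X⁻¹ᴴ * (J * X') * X'⁻¹ := by
        rw [mul_assoc, mul_assoc J, mul_nonsing_inv _ hX'd, mul_one]
    _ = (X * X⁻¹)ᴴ * J * X'⁻¹ := by
        rw [← show Xᴴ * J = J * X' from hX, conjTranspose_mul]; simp only [mul_assoc]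
    _ = J * X'⁻¹ := by rw [mul_nonsing_inv _ hXd, conjTranspose_one, one_mul]

variable {U : Matrix m m α}

theorem isJAdjoint_self_inv_of_conjTranspose_mul_mul (hU : Uᴴ * J * U = J) (hUd : IsUnit U.det) :
    IsJAdjoint J U U⁻¹ :=
  calc Uᴴ * J = Uᴴ * J * U * U⁻¹ := by rw [mul_assoc _ U, mul_nonsing_inv _ hUd, mul_one]
    _ = J * U⁻¹ := by rw [hU]

theorem isJAdjoint_inv_self_of_conjTranspose_mul_mul (hU : Uᴴ * J * U = J)
    (hUd : IsUnit U.det) : IsJAdjoint J U⁻¹ U := by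
  simpa only [nonsing_inv_nonsing_inv _ hUd] using
    (isJAdjoint_self_inv_of_conjTranspose_mul_mul hU hUd).inv hUd (isUnit_nonsing_inv_det _ hUd)

end JAdjoint

end Matrix

theorem stmt5_general {n : ℕ} (J A B C : Matrix (Fin n) (Fin n) ℂ)
    (hAJ : Aᴴ * J * A = J) (hBJ : Bᴴ * J * B = J) (hCJ : Cᴴ * J * C = J)
    (hABC : A * B * C = 1) (h1A : IsUnit (1 - A)) :
    ((-Complex.I) • ((1 - B⁻¹) * (1 - A)⁻¹ * (1 - C⁻¹)))ᴴ * J =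
      J * ((-Complex.I) • ((1 - B⁻¹) * (1 - A)⁻¹ * (1 - C⁻¹))) := by
  have hAd : IsUnit A.det := isUnit_det_of_right_inverse (B := B * C) (by rw [← mul_assoc, hABC])
  have hBd : IsUnit B.det := isUnit_det_of_right_inverse (B := C * A) <| by
    rw [← mul_assoc, mul_eq_one_comm, ← mul_assoc, hABC]
  have hCd : IsUnit C.det := isUnit_det_of_left_inverse hABC
  have h1Ad : IsUnit (1 - A).det := (isUnit_iff_isUnit_det _).mp h1A
  have h1A'd : IsUnit (1 - A⁻¹).det :=
    isUnit_det_of_right_inverse (one_sub_inv_mul_one_sub_inv_one_sub hAd h1Ad)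
  have hB' : IsJAdjoint J (1 - B⁻¹) (1 - B) :=
    (isJAdjoint_inv_self_of_conjTranspose_mul_mul hBJ hBd).one_sub
  have hA' : IsJAdjoint J (1 - A)⁻¹ (1 - A⁻¹)⁻¹ :=
    (isJAdjoint_self_inv_of_conjTranspose_mul_mul hAJ hAd).one_sub.inv h1Ad h1A'd
  have hC' : IsJAdjoint J (1 - C⁻¹) (1 - C) :=
    (isJAdjoint_inv_self_of_conjTranspose_mul_mul hCJ hCd).one_sub
  have hH := ((hB'.mul hA').mul hC').smul (-Complex.I)
  rw [← mul_assoc, one_sub_mul_inv_one_sub_inv_mul_one_sub hAd hBd h1Ad hABC] at hH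
  rwa [smul_neg, ← neg_smul, star_neg, Complex.star_def, Complex.conj_I, neg_neg] at hH

/-- If `J` is an invertible Hermitian matrix and `A`, `B`, `C` are invertible
`J`-unitary matrices with `ABC = 1` and `1 - A` invertible, then
`H = -i·(1-B⁻¹)(1-A)⁻¹(1-C⁻¹)` is `J`-self-adjoint: `Hᴴ·J = J·H`. -/
theorem stmt5 {n : ℕ} (J A B C : Matrix (Fin n) (Fin n) ℂ)
    (hJ : IsUnit J) (hJh : J.IsHermitian)
    (hA : IsUnit A) (hB : IsUnit B) (hC : IsUnit C)
    (hAJ : Aᴴ * J * A = J) (hBJ : Bᴴ * J * B = J) (hCJ : Cᴴ * J * C = J)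
    (hABC : A * B * C = 1) (h1A : IsUnit (1 - A)) :
    ((-Complex.I) • ((1 - B⁻¹) * (1 - A)⁻¹ * (1 - C⁻¹)))ᴴ * J =
      J * ((-Complex.I) • ((1 - B⁻¹) * (1 - A)⁻¹ * (1 - C⁻¹))) :=
  stmt5_general J A B C hAJ hBJ hCJ hABC h1A
end

section
/- Let n ≥ 1 and let Y, Z be n×n complex matrices such that iY + 1, iZ + 1 and Y + Z are invertible. Set B = (iY − 1)(iY + 1)^{−1} and C = (iZ − 1)(iZ + 1)^{−1}. Then CB − 1 is invertible and −i·(B − 1)(CB − 1)^{−1}(C − 1) = 2·(Y + Z)^{−1}. -/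
/-!
Writing `p = iY + 1` and `q = iZ + 1`, one has `B - 1 = -2 p⁻¹`, `C - 1 = -2 q⁻¹` and
`CB - 1 = -2 q⁻¹ (p + q - 2) p⁻¹` with `p + q - 2 = i (Y + Z)`. So `CB - 1` is a product of units,
and `(B - 1)(CB - 1)⁻¹(C - 1)` telescopes to `-2 (i (Y + Z))⁻¹`. Only the ring structure is used,
so the identity holds in any complex algebra.
-/

open Matrix

open scoped Ring

section Ring

variable {R : Type*} [Ring R] {p q : R}

/-- The Cayley transform `(iY - 1)(iY + 1)⁻¹` of `Y`, written in the variable `p = iY + 1`. -/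
noncomputable def shiftedCayley (p : R) : R := (p - 2) * p⁻¹ʳ

theorem shiftedCayley_sub_one (hp : IsUnit p) : shiftedCayley p - 1 = -2 * p⁻¹ʳ := by
  rw [shiftedCayley, sub_mul, Ring.mul_inverse_cancel p hp]
  noncomm_ring

theorem shiftedCayley_mul_shiftedCayley_sub_one (hp : IsUnit p) (hq : IsUnit q) :
    shiftedCayley q * shiftedCayley p - 1 = -2 * (q⁻¹ʳ * (p + q - 2) * p⁻¹ʳ) := by
  simp only [shiftedCayley, mul_add, add_mul, mul_sub, sub_mul, mul_assoc,
    Ring.mul_inverse_cancel p hp, Ring.mul_inverse_cancel q hq,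
    Ring.inverse_mul_cancel_left q _ hq, mul_one]
  noncomm_ring

theorem isUnit_shiftedCayley_mul_sub_one_and_eq (h2 : IsUnit (2 : R)) (hp : IsUnit p)
    (hq : IsUnit q) (hs : IsUnit (p + q - 2)) :
    IsUnit (shiftedCayley q * shiftedCayley p - 1) ∧
      (shiftedCayley p - 1) * (shiftedCayley q * shiftedCayley p - 1)⁻¹ʳ *
        (shiftedCayley q - 1) = -2 * (p + q - 2)⁻¹ʳ := by
  rw [shiftedCayley_mul_shiftedCayley_sub_one hp hq, shiftedCayley_sub_one hp,
    shiftedCayley_sub_one hq]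
  obtain ⟨T, hT⟩ := h2.neg
  obtain ⟨P, rfl⟩ := hp
  obtain ⟨Q, rfl⟩ := hq
  obtain ⟨S, hS⟩ := hs
  simp only [← hT, ← hS, Ring.inverse_unit, ← Units.val_mul, Units.isUnit, true_and]
  congr 1
  group

end Ring

theorem ringInverse_smul {𝕜 A : Type*} [Field 𝕜] [Ring A] [Algebra 𝕜 A] {c : 𝕜} (hc : c ≠ 0)
    {a : A} (ha : IsUnit a) : (c • a)⁻¹ʳ = c⁻¹ • a⁻¹ʳ := by
  have h₁ : c • a * (c⁻¹ • a⁻¹ʳ) = 1 := by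
    rw [smul_mul_smul_comm, mul_inv_cancel₀ hc, Ring.mul_inverse_cancel a ha, one_smul]
  have h₂ : c⁻¹ • a⁻¹ʳ * (c • a) = 1 := by
    rw [smul_mul_smul_comm, inv_mul_cancel₀ hc, Ring.inverse_mul_cancel a ha, one_smul]
  exact Ring.inverse_unit ⟨_, _, h₁, h₂⟩

theorem isUnit_cayley_mul_sub_one_and_eq {A : Type*} [Ring A] [Algebra ℂ A] {y z b c : A}
    (hy : IsUnit (Complex.I • y + 1)) (hz : IsUnit (Complex.I • z + 1)) (hyz : IsUnit (y + z))
    (hb : b = (Complex.I • y - 1) * (Complex.I • y + 1)⁻¹ʳ)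
    (hc : c = (Complex.I • z - 1) * (Complex.I • z + 1)⁻¹ʳ) :
    IsUnit (c * b - 1) ∧
      (-Complex.I) • ((b - 1) * (c * b - 1)⁻¹ʳ * (c - 1)) = (2 : ℂ) • (y + z)⁻¹ʳ := by
  have hb' : b = shiftedCayley (Complex.I • y + 1) := by
    rw [hb, shiftedCayley, ← one_add_one_eq_two, add_sub_add_right_eq_sub]
  have hc' : c = shiftedCayley (Complex.I • z + 1) := by
    rw [hc, shiftedCayley, ← one_add_one_eq_two, add_sub_add_right_eq_sub]
  have h2 : IsUnit (2 : A) := by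
    have := (IsUnit.mk0 (2 : ℂ) two_ne_zero).map (algebraMap ℂ A)
    rwa [map_ofNat] at this
  have hsum : Complex.I • y + 1 + (Complex.I • z + 1) - 2 = Complex.I • (y + z) := by
    rw [smul_add, ← one_add_one_eq_two]
    abel
  have hs : IsUnit (Complex.I • (y + z)) := hyz.smul (Units.mk0 _ Complex.I_ne_zero)
  obtain ⟨hunit, hformula⟩ := isUnit_shiftedCayley_mul_sub_one_and_eq h2 hy hz (hsum ▸ hs)
  refine ⟨hb' ▸ hc' ▸ hunit, ?_⟩
  rw [hb', hc', hformula, hsum, ringInverse_smul Complex.I_ne_zero hyz,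
    show (-2 : A) = algebraMap ℂ A (-2) by rw [map_neg, map_ofNat], ← Algebra.smul_def,
    smul_smul, smul_smul, Complex.inv_I]
  congr 1
  linear_combination (-2 : ℂ) * Complex.I_sq

theorem stmt6_general {n : ℕ} (Y Z B C : Matrix (Fin n) (Fin n) ℂ)
    (hY : IsUnit (Complex.I • Y + 1)) (hZ : IsUnit (Complex.I • Z + 1))
    (hYZ : IsUnit (Y + Z))
    (hB : B = (Complex.I • Y - 1) * (Complex.I • Y + 1)⁻¹)
    (hC : C = (Complex.I • Z - 1) * (Complex.I • Z + 1)⁻¹) :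
    IsUnit (C * B - 1) ∧
    (-Complex.I) • ((B - 1) * (C * B - 1)⁻¹ * (C - 1)) = (2 : ℂ) • (Y + Z)⁻¹ := by
  simp only [nonsing_inv_eq_ringInverse] at hB hC ⊢
  exact isUnit_cayley_mul_sub_one_and_eq hY hZ hYZ hB hC

/-- Cayley-parametrization identity: if `iY + 1`, `iZ + 1` and `Y + Z` are invertible
and `B`, `C` are the Cayley transforms of `Y`, `Z`, then `CB - 1` is invertible and
`-i·(B-1)(CB-1)⁻¹(C-1) = 2·(Y+Z)⁻¹`. -/
theorem stmt6 {n : ℕ} (hn : 1 ≤ n) (Y Z B C : Matrix (Fin n) (Fin n) ℂ)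
    (hY : IsUnit (Complex.I • Y + 1)) (hZ : IsUnit (Complex.I • Z + 1))
    (hYZ : IsUnit (Y + Z))
    (hB : B = (Complex.I • Y - 1) * (Complex.I • Y + 1)⁻¹)
    (hC : C = (Complex.I • Z - 1) * (Complex.I • Z + 1)⁻¹) :
    IsUnit (C * B - 1) ∧
    (-Complex.I) • ((B - 1) * (C * B - 1)⁻¹ * (C - 1)) = (2 : ℂ) • (Y + Z)⁻¹ :=
  stmt6_general Y Z B C hY hZ hYZ hB hC
end

section
/- In the ℚ-algebra L = ℚ[t]/(t³ − t − 1), the element t + 1 is invertible, the element s₀ = −(t + 1)^{−1} satisfies s₀³ + 2s₀² + 3s₀ + 1 = 0, and the induced ℚ-algebra homomorphism ℚ[s]/(s³ + 2s² + 3s + 1) → L sending s to s₀ is an isomorphism. In particular ℚ[s]/(s³ + 2s² + 3s + 1) and ℚ[t]/(t³ − t − 1) are isomorphic ℚ-algebras. -/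
/-!
From `t³ = t + 1` we get `(t + 1)(t² - t) = 1`, so `s₀ = t - t²`. Conversely
`s₀ (s₀² + 2 s₀ + 3) = -1`, so `t = -s₀⁻¹ - 1 = s₀² + 2 s₀ + 2`. The substitutions
`s ↦ t - t²` and `t ↦ s² + 2 s + 2` respect the two cubics and are mutually inverse, every
identity involved being a polynomial multiple of the defining relation.
-/

open Polynomial

namespace AdjoinRoot

variable {R : Type*} [CommRing R]

theorem aeval_root_self (f : R[X]) : aeval (root f) f = 0 := by
  rw [aeval_eq, mk_self]

variable {f g : R[X]}

noncomputable def liftOfAevalEqZero {S : Type*} [CommRing S] [Algebra R S] (x : S)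
    (hx : aeval x f = 0) : AdjoinRoot f →ₐ[R] S :=
  liftAlgHom f (Algebra.ofId R S) x hx

@[simp]
theorem liftOfAevalEqZero_root {S : Type*} [CommRing S] [Algebra R S] (x : S)
    (hx : aeval x f = 0) : liftOfAevalEqZero x hx (root f) = x :=
  liftAlgHom_root f _ x hx

noncomputable def algEquivOfRoots (a : AdjoinRoot g) (b : AdjoinRoot f) (ha : aeval a f = 0)
    (hb : aeval b g = 0) (hab : liftOfAevalEqZero a ha b = root g)
    (hba : liftOfAevalEqZero b hb a = root f) : AdjoinRoot f ≃ₐ[R] AdjoinRoot g :=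
  AlgEquiv.ofAlgHom (liftOfAevalEqZero a ha) (liftOfAevalEqZero b hb)
    (algHom_ext <| by simpa using hab) (algHom_ext <| by simpa using hba)

@[simp]
theorem algEquivOfRoots_root (a : AdjoinRoot g) (b : AdjoinRoot f) (ha hb hab hba) :
    algEquivOfRoots a b ha hb hab hba (root f) = a :=
  liftOfAevalEqZero_root a ha

end AdjoinRoot

section CubicRelations

variable {A : Type*} [CommRing A]

theorem add_one_mul_sq_sub_self_eq_one {t : A} (ht : t ^ 3 - t - 1 = 0) :
    (t + 1) * (t ^ 2 - t) = 1 := by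
  linear_combination ht

theorem cubic_sub_sq_eq_zero {t : A} (ht : t ^ 3 - t - 1 = 0) :
    (t - t ^ 2) ^ 3 + 2 * (t - t ^ 2) ^ 2 + 3 * (t - t ^ 2) + 1 = 0 := by
  linear_combination (-t ^ 3 + 3 * t ^ 2 - 2 * t - 1) * ht

theorem sub_sq_sq_add_two_mul_add_two {t : A} (ht : t ^ 3 - t - 1 = 0) :
    (t - t ^ 2) ^ 2 + 2 * (t - t ^ 2) + 2 = t := by
  linear_combination (t - 2) * ht

theorem cubic_sq_add_two_mul_add_two_eq_zero {s : A} (hs : s ^ 3 + 2 * s ^ 2 + 3 * s + 1 = 0) :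
    (s ^ 2 + 2 * s + 2) ^ 3 - (s ^ 2 + 2 * s + 2) - 1 = 0 := by
  linear_combination (s ^ 3 + 4 * s ^ 2 + 7 * s + 5) * hs

theorem sq_add_two_mul_add_two_sub_sq {s : A} (hs : s ^ 3 + 2 * s ^ 2 + 3 * s + 1 = 0) :
    (s ^ 2 + 2 * s + 2) - (s ^ 2 + 2 * s + 2) ^ 2 = s := by
  linear_combination (-s - 2) * hs

end CubicRelations

namespace AdjoinRoot

variable (R : Type*) [CommRing R]

local notation "𝒇" => (X ^ 3 - X - 1 : R[X])
local notation "𝒈" => (X ^ 3 + 2 * X ^ 2 + 3 * X + 1 : R[X])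

theorem root_cubic_eq_zero : root 𝒇 ^ 3 - root 𝒇 - 1 = 0 := by
  have := aeval_root_self 𝒇
  simpa only [map_sub, map_pow, aeval_X, map_one] using this

theorem root_cubic_eq_zero' :
    root 𝒈 ^ 3 + 2 * root 𝒈 ^ 2 + 3 * root 𝒈 + 1 = 0 := by
  have := aeval_root_self 𝒈
  simpa only [map_add, map_mul, map_pow, aeval_X, map_one, map_ofNat] using this

theorem isUnit_root_add_one : IsUnit (root 𝒇 + 1) :=
  .of_mul_eq_one _ (add_one_mul_sq_sub_self_eq_one (root_cubic_eq_zero R))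

theorem neg_inverse_root_add_one : -Ring.inverse (root 𝒇 + 1) = root 𝒇 - root 𝒇 ^ 2 := by
  have : Ring.inverse (root 𝒇 + 1) = root 𝒇 ^ 2 - root 𝒇 :=
    Ring.inverse_unit <|
      Units.mkOfMulEqOne _ _ (add_one_mul_sq_sub_self_eq_one (root_cubic_eq_zero R))
  rw [this, neg_sub]

noncomputable def cubicAlgEquiv : AdjoinRoot 𝒈 ≃ₐ[R] AdjoinRoot 𝒇 :=
  algEquivOfRoots (root 𝒇 - root 𝒇 ^ 2) (root 𝒈 ^ 2 + 2 * root 𝒈 + 2)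
    (by simp only [map_add, map_mul, map_pow, map_ofNat, map_one, aeval_X]
        exact cubic_sub_sq_eq_zero (root_cubic_eq_zero R))
    (by simp only [map_sub, map_pow, map_one, aeval_X]
        exact cubic_sq_add_two_mul_add_two_eq_zero (root_cubic_eq_zero' R))
    (by simp only [map_add, map_mul, map_pow, map_ofNat, liftOfAevalEqZero_root]
        exact sub_sq_sq_add_two_mul_add_two (root_cubic_eq_zero R))
    (by simp only [map_sub, map_pow, liftOfAevalEqZero_root]
        exact sq_add_two_mul_add_two_sub_sq (root_cubic_eq_zero' R))

theorem cubicAlgEquiv_root : cubicAlgEquiv R (root 𝒈) = root 𝒇 - root 𝒇 ^ 2 :=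
  algEquivOfRoots_root ..

end AdjoinRoot

open AdjoinRoot in
/-- In `L = ℚ[t]/(t³ - t - 1)` the element `t + 1` is invertible,
`s₀ = -(t+1)⁻¹` satisfies `s₀³ + 2s₀² + 3s₀ + 1 = 0`, and the induced
`ℚ`-algebra homomorphism `ℚ[s]/(s³ + 2s² + 3s + 1) → L`, `s ↦ s₀`,
is an isomorphism. -/
theorem stmt7 :
    ∀ t : ℚ[X] ⧸ Ideal.span {(X : ℚ[X]) ^ 3 - X - 1},
      t = Ideal.Quotient.mk (Ideal.span {(X : ℚ[X]) ^ 3 - X - 1}) X →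
        IsUnit (t + 1) ∧
        ∀ s₀ : ℚ[X] ⧸ Ideal.span {(X : ℚ[X]) ^ 3 - X - 1},
          s₀ = -Ring.inverse (t + 1) →
            s₀ ^ 3 + 2 * s₀ ^ 2 + 3 * s₀ + 1 = 0 ∧
            ∃ φ : (ℚ[X] ⧸ Ideal.span {(X : ℚ[X]) ^ 3 + 2 * X ^ 2 + 3 * X + 1}) ≃ₐ[ℚ]
                (ℚ[X] ⧸ Ideal.span {(X : ℚ[X]) ^ 3 - X - 1}),
              φ (Ideal.Quotient.mk (Ideal.span {(X : ℚ[X]) ^ 3 + 2 * X ^ 2 + 3 * X + 1}) X)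
                = s₀ := by
  rintro t rfl
  refine ⟨isUnit_root_add_one ℚ, fun s₀ hs₀ => ?_⟩
  obtain rfl : s₀ = root (X ^ 3 - X - 1) - root (X ^ 3 - X - 1) ^ 2 :=
    hs₀.trans (neg_inverse_root_add_one ℚ)
  exact ⟨cubic_sub_sq_eq_zero (root_cubic_eq_zero ℚ), cubicAlgEquiv ℚ,
    cubicAlgEquiv_root ℚ⟩
end

section
/- The polynomial t³ − t − 1 is irreducible over ℚ, so V = ℚ[t]/(t³ − t − 1) is a field. The unique ℚ-linear form ε on V determined by ε(1) = 1, ε(t) = 0, ε(t²) = 1 satisfies ε(x) = tr_{V/ℚ}(α·x) for all x ∈ V, where α = (9 + 3t − 2t²)/23. -/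
/-!
In the basis `1, t, t²` multiplication by `t` is the companion matrix `M` of `t³ - t - 1`, so
`tr(α tʲ) = tr(A Mʲ)` with `A` the matrix of `α`; checking `ε = tr(α · -)` on the basis is then
a `3 × 3` matrix computation. The denominator comes from inverting the trace form: its Gram
matrix `(tr(tⁱ⁺ʲ))ᵢⱼ` has determinant `disc(t³ - t - 1) = -23`.
-/

open Polynomial

section SelmerCubic

variable {R : Type*} [CommRing R]

local notation "V" => AdjoinRoot (X ^ 3 - X - 1 : R[X])
local notation "t" => AdjoinRoot.root (X ^ 3 - X - 1 : R[X])

lemma selmerCubic_root_pow_three : t ^ 3 = t + 1 := by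
  have h := AdjoinRoot.eval₂_root (X ^ 3 - X - 1 : R[X])
  simp only [eval₂_sub, eval₂_X_pow, eval₂_X, eval₂_one] at h
  linear_combination h

variable [Nontrivial R]

noncomputable def selmerCubicBasis : Module.Basis (Fin 3) R V :=
  (AdjoinRoot.powerBasis' (by monicity! : (X ^ 3 - X - 1 : R[X]).Monic)).basis.reindex
    (finCongr (by simp only [AdjoinRoot.powerBasis'_dim]; compute_degree!))

lemma selmerCubicBasis_apply (i : Fin 3) : selmerCubicBasis i = t ^ (i : ℕ) := by
  simp [selmerCubicBasis]

lemma leftMulMatrix_selmerCubicBasis_root :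
    Algebra.leftMulMatrix selmerCubicBasis t = !![0, 0, 1; 1, 0, 1; 0, 1, 0] := by
  rw [Algebra.leftMulMatrix_apply, ← LinearEquiv.eq_symm_apply, LinearMap.toMatrix_symm]
  refine selmerCubicBasis.ext fun j => ?_
  rw [Matrix.toLin_self, Algebra.coe_lmul_eq_mul, LinearMap.mul_apply']
  fin_cases j <;> simp [Fin.sum_univ_three, selmerCubicBasis_apply]
  · ring
  · linear_combination selmerCubic_root_pow_three (R := R)

end SelmerCubic

section TraceForm

variable {K : Type*} [Field K]

local notation "V" => AdjoinRoot (X ^ 3 - X - 1 : K[X])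
local notation "t" => AdjoinRoot.root (X ^ 3 - X - 1 : K[X])

lemma selmerCubic_eq_trace_mul (h23 : (23 : K) ≠ 0) (ε : V →ₗ[K] K)
    (h1 : ε 1 = 1) (ht : ε t = 0) (ht2 : ε (t ^ 2) = 1) (x : V) :
    ε x = Algebra.trace K V (((23 : K)⁻¹ • (9 + 3 * t - 2 * t ^ 2)) * x) := by
  suffices
      ε = (Algebra.trace K V).comp (LinearMap.mulLeft K ((23 : K)⁻¹ • (9 + 3 * t - 2 * t ^ 2)))
    from LinearMap.congr_fun this x
  refine selmerCubicBasis.ext fun j => ?_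
  rw [LinearMap.comp_apply, LinearMap.mulLeft_apply, Algebra.trace_eq_matrix_trace selmerCubicBasis]
  simp only [map_mul, map_smul, map_sub, map_add, map_pow, map_ofNat,
    leftMulMatrix_selmerCubicBasis_root, selmerCubicBasis_apply]
  fin_cases j <;> simp only [pow_zero, pow_one, h1, ht, ht2] <;>
    simp [Matrix.trace_fin_three, Matrix.mul_apply, Fin.sum_univ_three, Matrix.ofNat_apply, sq] <;>
    norm_num [h23]

end TraceForm

/-- `t³ - t - 1` is irreducible over `ℚ`, so `V = ℚ[t]/(t³ - t - 1)` is a field;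
the `ℚ`-linear form `ε` with `ε(1) = 1`, `ε(t) = 0`, `ε(t²) = 1` satisfies
`ε(x) = tr_{V/ℚ}(α·x)` for `α = (9 + 3t - 2t²)/23`. -/
theorem stmt9 :
    Irreducible ((X : ℚ[X]) ^ 3 - X - 1) ∧
    IsField (ℚ[X] ⧸ Ideal.span {(X : ℚ[X]) ^ 3 - X - 1}) ∧
    ∀ t : ℚ[X] ⧸ Ideal.span {(X : ℚ[X]) ^ 3 - X - 1},
      t = Ideal.Quotient.mk (Ideal.span {(X : ℚ[X]) ^ 3 - X - 1}) X →
      ∀ ε : (ℚ[X] ⧸ Ideal.span {(X : ℚ[X]) ^ 3 - X - 1}) →ₗ[ℚ] ℚ,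
        ε 1 = 1 → ε t = 0 → ε (t ^ 2) = 1 →
        ∀ x : ℚ[X] ⧸ Ideal.span {(X : ℚ[X]) ^ 3 - X - 1},
          ε x = Algebra.trace ℚ (ℚ[X] ⧸ Ideal.span {(X : ℚ[X]) ^ 3 - X - 1})
            (((23 : ℚ)⁻¹ • (9 + 3 * t - 2 * t ^ 2)) * x) := by
  have hirr : Irreducible ((X : ℚ[X]) ^ 3 - X - 1) :=
    X_pow_sub_X_sub_one_irreducible_rat (by norm_num)
  refine ⟨hirr, ?_, ?_⟩
  · exact (Ideal.Quotient.maximal_ideal_iff_isField_quotient _).mp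
      (PrincipalIdealRing.isMaximal_of_irreducible hirr)
  · rintro t rfl ε h1 ht ht2 x
    exact selmerCubic_eq_trace_mul (by norm_num) ε h1 ht ht2 x
end

section
/- The polynomial s³ + 2s² + 3s + 1 is irreducible over ℚ, so V = ℚ[s]/(s³ + 2s² + 3s + 1) is a field. The unique ℚ-linear form ε on V determined by ε(1) = 1, ε(s) = 0, ε(s²) = −1 satisfies ε(x) = tr_{V/ℚ}(α·x) for all x ∈ V, where α = (19 + 9s + 8s²)/23. -/
/-!
Reducing modulo 2 gives `X³ + X + 1`, which has no root in `𝔽₂`; hence the monic cubic is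
irreducible over `ℤ`, and by Gauss's lemma over `ℚ`.

Both `ε` and `x ↦ tr(α x)` are `ℚ`-linear, so it suffices to compare them on the power basis
`1, θ, θ²`. Multiplication by `θ` acts on that basis by the companion matrix `C`, so the power
sums `tr(θᵏ) = tr(Cᵏ)` are `3, -2, -2, 7, -6` for `k = 0, …, 4`, and
`tr(α θᵏ) = (19 tr(θᵏ) + 9 tr(θᵏ⁺¹) + 8 tr(θᵏ⁺²)) / 23` equals `1, 0, -1` for `k = 0, 1, 2`.
-/

open Polynomial

namespace Level7

section

variable (R : Type*) [CommRing R]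

noncomputable def cubic : R[X] := X ^ 3 + 2 * X ^ 2 + 3 * X + 1

variable {R}

lemma cubic_monic [Nontrivial R] : (cubic R).Monic := by
  unfold cubic; monicity!

lemma natDegree_cubic [Nontrivial R] : (cubic R).natDegree = 3 := by
  unfold cubic; compute_degree!

lemma map_cubic {S : Type*} [CommRing S] (f : R →+* S) : (cubic R).map f = cubic S := by
  simp [cubic]

end

lemma irreducible_cubic_zmod_two : Irreducible (cubic (ZMod 2)) := by
  rw [cubic_monic.irreducible_iff_roots_eq_zero_of_degree_le_three
    (by rw [natDegree_cubic]; omega) natDegree_cubic.le]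
  refine Multiset.eq_zero_of_forall_notMem fun r hr => ?_
  rw [mem_roots cubic_monic.ne_zero, IsRoot, cubic] at hr
  simp only [eval_add, eval_mul, eval_pow, eval_X, eval_one, eval_ofNat] at hr
  revert r hr
  decide

lemma irreducible_cubic_rat : Irreducible (cubic ℚ) := by
  have irreducible_int : Irreducible (cubic ℤ) :=
    cubic_monic.irreducible_of_irreducible_map (Int.castRingHom (ZMod 2)) _
      (by rw [map_cubic]; exact irreducible_cubic_zmod_two)
  rw [← map_cubic (Int.castRingHom ℚ)]
  exact (IsPrimitive.Int.irreducible_iff_irreducible_map_cast cubic_monic.isPrimitive).mp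
    irreducible_int

local notation "V" => AdjoinRoot (cubic ℚ)

local notation "θ" => AdjoinRoot.root (cubic ℚ)

lemma root_pow_three : θ ^ 3 = -1 - 3 * θ - 2 * θ ^ 2 := by
  have h : aeval θ (X ^ 3 + 2 * X ^ 2 + 3 * X + 1 : ℚ[X]) = 0 := by
    rw [AdjoinRoot.aeval_eq]
    exact AdjoinRoot.mk_self
  simp only [map_add, map_mul, map_pow, aeval_X, map_ofNat, map_one] at h
  linear_combination h

noncomputable def powerBasis : Module.Basis (Fin 3) ℚ V :=
  (AdjoinRoot.powerBasis' cubic_monic).basis.reindex (finCongr natDegree_cubic)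

lemma powerBasis_apply (i : Fin 3) : powerBasis i = θ ^ (i : ℕ) := by
  simp only [powerBasis, Module.Basis.coe_reindex, PowerBasis.coe_basis,
    AdjoinRoot.powerBasis'_gen, Function.comp_apply]
  rfl

def companion : Matrix (Fin 3) (Fin 3) ℚ := !![0, 0, -1; 1, 0, -3; 0, 1, -2]

lemma leftMulMatrix_root : Algebra.leftMulMatrix powerBasis θ = companion := by
  have mul_powerBasis (j : Fin 3) : θ * powerBasis j = ∑ i, companion i j • powerBasis i := by
    fin_cases j <;>
      simp [Fin.sum_univ_three, powerBasis_apply, companion, ← pow_succ', root_pow_three,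
        Algebra.smul_def, map_ofNat] <;> ring
  ext i j
  rw [Algebra.leftMulMatrix_eq_repr_mul, mul_powerBasis, powerBasis.repr_sum_self]

lemma trace_root_pow (k : ℕ) : Algebra.trace ℚ V (θ ^ k) = (companion ^ k).trace := by
  rw [Algebra.trace_eq_matrix_trace powerBasis, map_pow, leftMulMatrix_root]

lemma trace_root_pow_eq :
    Algebra.trace ℚ V (θ ^ 0) = 3 ∧ Algebra.trace ℚ V (θ ^ 1) = -2 ∧
      Algebra.trace ℚ V (θ ^ 2) = -2 ∧ Algebra.trace ℚ V (θ ^ 3) = 7 ∧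
      Algebra.trace ℚ V (θ ^ 4) = -6 := by
  simp only [trace_root_pow]
  simp [companion, pow_succ, Matrix.trace_fin_three]
  norm_num

noncomputable def alpha : V := (23 : ℚ)⁻¹ • (19 + 9 * θ + 8 * θ ^ 2)

lemma trace_alpha_mul_root_pow (k : ℕ) :
    Algebra.trace ℚ V (alpha * θ ^ k) =
      23⁻¹ * (19 * Algebra.trace ℚ V (θ ^ k) + 9 * Algebra.trace ℚ V (θ ^ (k + 1)) +
        8 * Algebra.trace ℚ V (θ ^ (k + 2))) := by
  have expand : (19 + 9 * θ + 8 * θ ^ 2) * θ ^ k =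
      (19 : ℚ) • θ ^ k + (9 : ℚ) • θ ^ (k + 1) + (8 : ℚ) • θ ^ (k + 2) := by
    simp only [Algebra.smul_def, map_ofNat]
    ring
  rw [alpha, smul_mul_assoc, expand]
  simp only [map_smul, map_add, smul_eq_mul]

lemma trace_alpha_mul_powerBasis (i : Fin 3) :
    Algebra.trace ℚ V (alpha * powerBasis i) = ![1, 0, -1] i := by
  obtain ⟨t0, t1, t2, t3, t4⟩ := trace_root_pow_eq
  rw [powerBasis_apply, trace_alpha_mul_root_pow]
  fin_cases i
  · simp only [t0, t1, t2]; norm_num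
  · simp only [t1, t2, t3]; norm_num
  · simp only [t2, t3, t4]; norm_num

end Level7

open Level7

/-- `s³ + 2s² + 3s + 1` is irreducible over `ℚ`, so `V = ℚ[s]/(s³ + 2s² + 3s + 1)` is a
field; the `ℚ`-linear form `ε` with `ε(1) = 1`, `ε(s) = 0`, `ε(s²) = -1` satisfies
`ε(x) = tr_{V/ℚ}(α·x)` for `α = (19 + 9s + 8s²)/23`. -/
theorem stmt10 :
    Irreducible ((X : ℚ[X]) ^ 3 + 2 * X ^ 2 + 3 * X + 1) ∧
    IsField (ℚ[X] ⧸ Ideal.span {(X : ℚ[X]) ^ 3 + 2 * X ^ 2 + 3 * X + 1}) ∧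
    ∀ s : ℚ[X] ⧸ Ideal.span {(X : ℚ[X]) ^ 3 + 2 * X ^ 2 + 3 * X + 1},
      s = Ideal.Quotient.mk (Ideal.span {(X : ℚ[X]) ^ 3 + 2 * X ^ 2 + 3 * X + 1}) X →
      ∀ ε : (ℚ[X] ⧸ Ideal.span {(X : ℚ[X]) ^ 3 + 2 * X ^ 2 + 3 * X + 1}) →ₗ[ℚ] ℚ,
        ε 1 = 1 → ε s = 0 → ε (s ^ 2) = -1 →
        ∀ x : ℚ[X] ⧸ Ideal.span {(X : ℚ[X]) ^ 3 + 2 * X ^ 2 + 3 * X + 1},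
          ε x = Algebra.trace ℚ (ℚ[X] ⧸ Ideal.span {(X : ℚ[X]) ^ 3 + 2 * X ^ 2 + 3 * X + 1})
            (((23 : ℚ)⁻¹ • (19 + 9 * s + 8 * s ^ 2)) * x) := by
  refine ⟨irreducible_cubic_rat, ?_, ?_⟩
  · exact (Ideal.Quotient.maximal_ideal_iff_isField_quotient _).mp
      (PrincipalIdealRing.isMaximal_of_irreducible irreducible_cubic_rat)
  · rintro s rfl ε h0 h1 h2 x
    have hε : ε = (Algebra.trace ℚ (AdjoinRoot (cubic ℚ))).comp (LinearMap.mulLeft ℚ alpha) := by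
      refine powerBasis.ext fun i => ?_
      rw [LinearMap.comp_apply, LinearMap.mulLeft_apply, trace_alpha_mul_powerBasis,
        powerBasis_apply]
      fin_cases i
      exacts [h0, (congrArg ε (pow_one _)).trans h1, h2]
    exact LinearMap.congr_fun hε x
end

section
/- Let φ = (1+√5)/2 ∈ ℚ(√5) be the golden ratio and let j be a primitive cube root of unity, i.e. the class of X in ℚ(j) = ℚ[X]/(X² + X + 1). For integers g ≥ 0 and n ≥ 0 define d_{g,n} = tr_{ℚ(φ)/ℚ}(φⁿ·(2+φ)^{g−1}) and σ_{g,n} = tr_{ℚ(j)/ℚ}(jⁿ·(2+j)^{g−1}) (where for g = 0 the exponent −1 means the inverse of 2+φ, resp. 2+j, in the field), and set p_{g,n} = (d_{g,n} + σ_{g,n})/2 and q_{g,n} = (d_{g,n} − σ_{g,n})/2. Then for every (g,n) in {(0,4), (0,5), (1,2), (1,3), (2,1)} one has p_{g,n} · q_{g,n} = 3g − 3 + n. -/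
/-! In a quadratic extension `K/F` the element `x ∉ F` with `x² = b x + c` has trace `b`, so
`tr(a + r x) = 2a + r b`. Using `(2 + φ)⁻¹ = (3 - φ)/5` and `(2 + j)⁻¹ = (1 - j)/3`, each
`φⁿ(2+φ)^{g-1}` and `jⁿ(2+j)^{g-1}` reduces to the form `a + r x`; in the five cases this gives
`(d, σ) = (2, 0), (3, -1), (3, -1), (4, 2), (5, -3)`. -/

open Module

section QuadraticTrace

variable {F K : Type*} [Field F] [Field K] [Algebra F K]

theorem notMem_range_algebraMap_of_sq_eq {x : K} {b c : F}
    (hx : x ^ 2 = algebraMap F K b * x + algebraMap F K c) (hbc : ¬IsSquare (b ^ 2 + 4 * c)) :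
    x ∉ Set.range (algebraMap F K) := by
  rintro ⟨q, rfl⟩
  have hq : q ^ 2 = b * q + c := (algebraMap F K).injective (by simpa using hx)
  exact hbc ⟨2 * q - b, by linear_combination (-4 : F) * hq⟩

theorem trace_eq_of_sq_eq (hK : finrank F K = 2) {x : K} (hxF : x ∉ Set.range (algebraMap F K))
    {b c : F} (hx : x ^ 2 = algebraMap F K b * x + algebraMap F K c) :
    Algebra.trace F K x = b := by
  have hli : LinearIndependent F ![x, 1] := by
    rw [linearIndependent_fin2]
    refine ⟨one_ne_zero, fun a ha => hxF ⟨a, ?_⟩⟩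
    rwa [Algebra.algebraMap_eq_smul_one]
  let B := basisOfLinearIndependentOfCardEqFinrank hli (by simp [hK])
  have hB : ⇑B = ![x, 1] := coe_basisOfLinearIndependentOfCardEqFinrank hli _
  have hB₀ : B 0 = x := by simp [hB]
  have hB₁ : B 1 = 1 := by simp [hB]
  -- in the basis `(x, 1)`, multiplication by `x` has matrix `!![b, 1; c, 0]`
  have hxx : x * x = b • B 0 + c • B 1 := by
    rw [hB₀, hB₁, ← sq, hx, Algebra.smul_def, Algebra.smul_def, mul_one]
  have hx1 : x * 1 = (1 : F) • B 0 := by rw [hB₀, one_smul, mul_one]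
  rw [Algebra.trace_eq_matrix_trace B, Matrix.trace_fin_two,
    Algebra.leftMulMatrix_eq_repr_mul, Algebra.leftMulMatrix_eq_repr_mul, hB₀, hB₁, hxx, hx1]
  simp [B.repr_self]

theorem trace_algebraMap_add_mul (hK : finrank F K = 2) (a r : F) (x : K) :
    Algebra.trace F K (algebraMap F K a + algebraMap F K r * x) =
      2 * a + r * Algebra.trace F K x := by
  rw [map_add, Algebra.trace_algebraMap, hK, ← Algebra.smul_def, map_smul, nsmul_eq_mul,
    smul_eq_mul, Nat.cast_ofNat]

end QuadraticTrace

section RationalQuadratic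

variable {K : Type*} [Field K] [Algebra ℚ K]

theorem trace_ratCast_add_mul_of_sq_eq (hK : finrank ℚ K = 2) {x : K} {b c : ℚ}
    (hx : x ^ 2 = b * x + c) (hbc : ¬IsSquare (b ^ 2 + 4 * c)) (a r : ℚ) :
    Algebra.trace ℚ K (a + r * x) = 2 * a + r * b := by
  simp only [← eq_ratCast (algebraMap ℚ K)] at hx ⊢
  rw [trace_algebraMap_add_mul hK,
    trace_eq_of_sq_eq hK (notMem_range_algebraMap_of_sq_eq hx hbc) hx]

theorem trace_add_mul_of_sq_eq_add_one (hK : finrank ℚ K = 2) {φ : K} (hφ : φ ^ 2 = φ + 1)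
    (a r : ℚ) : Algebra.trace ℚ K (a + r * φ) = 2 * a + r := by
  have hφ' : φ ^ 2 = ((1 : ℚ) : K) * φ + ((1 : ℚ) : K) := by simpa using hφ
  have h5 : ¬IsSquare ((1 : ℚ) ^ 2 + 4 * 1) := by rw [Rat.isSquare_iff]; norm_num
  simpa using trace_ratCast_add_mul_of_sq_eq hK hφ' h5 a r

theorem trace_add_mul_of_sq_add_add_one_eq_zero (hK : finrank ℚ K = 2) {j : K}
    (hj : j ^ 2 + j + 1 = 0) (a r : ℚ) : Algebra.trace ℚ K (a + r * j) = 2 * a - r := by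
  have hj' : j ^ 2 = ((-1 : ℚ) : K) * j + ((-1 : ℚ) : K) := by
    push_cast; linear_combination hj
  have h3 : ¬IsSquare ((-1 : ℚ) ^ 2 + 4 * -1) := fun h => by have := h.nonneg; norm_num at this
  simpa [sub_eq_add_neg] using trace_ratCast_add_mul_of_sq_eq hK hj' h3 a r

end RationalQuadratic

/-- Dimension/signature coincidence for the Fibonacci quantum representations:
with `φ` the golden ratio (generator of `ℚ(√5)` with `φ² = φ + 1`) and `j` a primitive
cube root of unity (generator of `ℚ(j)` with `j² + j + 1 = 0`), setting
`d = tr(φⁿ(2+φ)^{g-1})`, `σ = tr(jⁿ(2+j)^{g-1})`, `p = (d+σ)/2`, `q = (d-σ)/2`,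
one has `p·q = 3g - 3 + n` for `(g,n) ∈ {(0,4),(0,5),(1,2),(1,3),(2,1)}`. -/
theorem stmt14 (K₁ : Type*) [Field K₁] [Algebra ℚ K₁]
    (φ : K₁) (hφ : φ ^ 2 = φ + 1) (hK₁ : Module.finrank ℚ K₁ = 2)
    (K₂ : Type*) [Field K₂] [Algebra ℚ K₂]
    (j : K₂) (hj : j ^ 2 + j + 1 = 0) (hK₂ : Module.finrank ℚ K₂ = 2)
    (g n : ℕ)
    (hgn : (g, n) ∈ ({(0, 4), (0, 5), (1, 2), (1, 3), (2, 1)} : Set (ℕ × ℕ))) :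
    ∀ d σ p q : ℚ,
      d = Algebra.trace ℚ K₁ (φ ^ n * (2 + φ) ^ ((g : ℤ) - 1)) →
      σ = Algebra.trace ℚ K₂ (j ^ n * (2 + j) ^ ((g : ℤ) - 1)) →
      p = (d + σ) / 2 → q = (d - σ) / 2 →
      p * q = 3 * (g : ℚ) - 3 + (n : ℚ) := by
  rintro d σ p q rfl rfl rfl rfl
  have := charZero_of_injective_algebraMap (algebraMap ℚ K₁).injective
  have := charZero_of_injective_algebraMap (algebraMap ℚ K₂).injective
  have hinv₁ : (2 + φ)⁻¹ = (3 - φ) / 5 := inv_eq_of_mul_eq_one_right (by linear_combination -hφ / 5)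
  have hinv₂ : (2 + j)⁻¹ = (1 - j) / 3 := inv_eq_of_mul_eq_one_right (by linear_combination -hj / 3)
  obtain ⟨a₁, r₁, a₂, r₂, h₁, h₂, hpq⟩ : ∃ a₁ r₁ a₂ r₂ : ℚ,
      φ ^ n * (2 + φ) ^ ((g : ℤ) - 1) = a₁ + r₁ * φ ∧
      j ^ n * (2 + j) ^ ((g : ℤ) - 1) = a₂ + r₂ * j ∧
      (2 * a₁ + r₁ + (2 * a₂ - r₂)) / 2 * ((2 * a₁ + r₁ - (2 * a₂ - r₂)) / 2) =
        3 * (g : ℚ) - 3 + n := by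
    simp only [Set.mem_insert_iff, Set.mem_singleton_iff, Prod.mk.injEq] at hgn
    rcases hgn with ⟨rfl, rfl⟩ | ⟨rfl, rfl⟩ | ⟨rfl, rfl⟩ | ⟨rfl, rfl⟩ | ⟨rfl, rfl⟩
    · refine ⟨3 / 5, 4 / 5, 1 / 3, 2 / 3, ?_, ?_, by norm_num⟩
      · norm_num [hinv₁]; linear_combination (-φ ^ 3 + 2 * φ ^ 2 + φ + 3) / 5 * hφ
      · norm_num [hinv₂]; linear_combination (-j ^ 3 + 2 * j ^ 2 - j - 1) / 3 * hj
    · refine ⟨4 / 5, 7 / 5, -2 / 3, -1 / 3, ?_, ?_, by norm_num⟩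
      · norm_num [hinv₁]; linear_combination (-φ ^ 4 + 2 * φ ^ 3 + φ ^ 2 + 3 * φ + 4) / 5 * hφ
      · norm_num [hinv₂]; linear_combination (-j ^ 4 + 2 * j ^ 3 - j ^ 2 - j + 2) / 3 * hj
    · refine ⟨1, 1, -1, -1, ?_, ?_, by norm_num⟩
      · norm_num; linear_combination hφ
      · norm_num; linear_combination hj
    · refine ⟨1, 2, 1, 0, ?_, ?_, by norm_num⟩
      · norm_num; linear_combination (φ + 1) * hφ
      · norm_num; linear_combination (j - 1) * hj
    · refine ⟨1, 3, -1, 1, ?_, ?_, by norm_num⟩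
      · norm_num; linear_combination hφ
      · norm_num; linear_combination hj
  rwa [h₁, h₂, trace_add_mul_of_sq_eq_add_one hK₁ hφ,
    trace_add_mul_of_sq_add_add_one_eq_zero hK₂ hj]
end
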